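/- For a graph K on vertex set {(g_i, h_j) : 1 ≤ i ≤ p, 1 ≤ j ≤ q} with p, q ≥ 2, the following three statements are equivalent: (i) K ∈ 𝒦(p,q), i.e., K is a tensor 2-sum with first factors on p vertices and second factors on q vertices; (ii) K is a spanning, cross-like subgraph of K_p ⊗ K_q; (iii) K is a 2-sum of tensor-elementary graphs. -/

import Mathlib

/-!
Tensor products are cross-like and 2-sums preserve cross-likeness and containment in
`K_p ⊗ K_q`, which gives (i) ⇒ (ii); (iii) ⇒ (i) holds because `E(i,i';j,j')` is itself a
tensor product of single-edge graphs. For (ii) ⇒ (iii), a cross-like `K` containing the edge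
`{(a,b),(c,d)}` contains the whole cross `E(a,c;b,d)`. Since that cross is a subgraph of `K`,
its 2-sum with `K` is `K` minus the cross, a strictly smaller cross-like graph, and
well-founded induction on the finite lattice of graphs finishes the argument.
-/

open SimpleGraph

variable {α β : Type*}

/-- The tensor (categorical / direct) product of two simple graphs:
`(g,h)` and `(g',h')` are adjacent iff `g ~ g'` in `G` and `h ~ h'` in `H`. -/
def tensorProd (G : SimpleGraph α) (H : SimpleGraph β) : SimpleGraph (α × β) where
  Adj x y := G.Adj x.1 y.1 ∧ H.Adj x.2 y.2
  symm := ⟨fun _ _ h => ⟨h.1.symm, h.2.symm⟩⟩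
  loopless := ⟨fun x h => G.irrefl h.1⟩

infixl:70 " ⊗t " => tensorProd

@[simp] lemma tensorProd_adj (G : SimpleGraph α) (H : SimpleGraph β) (x y : α × β) :
    (G ⊗t H).Adj x y ↔ G.Adj x.1 y.1 ∧ H.Adj x.2 y.2 := Iff.rfl

/-- The 2-sum (sum modulo 2) of two graphs on a common vertex set: the edge set is
the symmetric difference of the two edge sets. -/
def twoSum (G H : SimpleGraph α) : SimpleGraph α where
  Adj u v := (G.Adj u v ∧ ¬ H.Adj u v) ∨ (H.Adj u v ∧ ¬ G.Adj u v)
  symm := ⟨fun u v h => h.imp (fun h' => ⟨h'.1.symm, fun hh => h'.2 hh.symm⟩)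
    (fun h' => ⟨h'.1.symm, fun hh => h'.2 hh.symm⟩)⟩
  loopless := ⟨fun u h => h.elim (fun h' => G.irrefl h'.1) (fun h' => H.irrefl h'.1)⟩

@[simp] lemma twoSum_adj (G H : SimpleGraph α) (u v : α) :
    (twoSum G H).Adj u v ↔ (G.Adj u v ∧ ¬ H.Adj u v) ∨ (H.Adj u v ∧ ¬ G.Adj u v) := Iff.rfl

/-- The iterated 2-sum `⊕_{k=1}^l F k` (`⊥`, the empty graph, is the neutral element). -/
def twoSumMany {l : ℕ} (F : Fin l → SimpleGraph α) : SimpleGraph α :=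
  (List.ofFn F).foldr twoSum ⊥

/-- `K ∈ 𝒦(p,q)`: `K` is a 2-sum `⊕_{k=1}^l (G_k ⊗ H_k)` of tensor products, where every
`G_k` is a graph on `p` fixed vertices with at least one edge and every `H_k` is a graph on
`q` fixed vertices with at least one edge. -/
def MemK (p q : ℕ) (K : SimpleGraph (Fin p × Fin q)) : Prop :=
  ∃ (l : ℕ) (G : Fin l → SimpleGraph (Fin p)) (H : Fin l → SimpleGraph (Fin q)),
    0 < l ∧ (∀ k, ∃ a b, (G k).Adj a b) ∧ (∀ k, ∃ c d, (H k).Adj c d) ∧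
    K = twoSumMany fun k => (G k) ⊗t (H k)

/-- A graph on `α × β` is cross-like if `(a,b) ~ (c,d)` implies `(a,d) ~ (c,b)`. -/
def CrossLike (K : SimpleGraph (α × β)) : Prop :=
  ∀ a c : α, ∀ b d : β, K.Adj (a, b) (c, d) → K.Adj (a, d) (c, b)

/-- The graph with the single edge `{a,b}` (for `a ≠ b`). -/
def singleEdge (a b : α) : SimpleGraph α := fromEdgeSet {s(a, b)}

/-- The tensor-elementary graph `E(i,i';j,j')`: the tensor product of the single-edge
graph with edge `{g_i, g_{i'}}` and the single-edge graph with edge `{h_j, h_{j'}}`. -/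
def tensorElem {p q : ℕ} (i i' : Fin p) (j j' : Fin q) : SimpleGraph (Fin p × Fin q) :=
  singleEdge i i' ⊗t singleEdge j j'

open scoped symmDiff

theorem twoSum_eq_symmDiff (G H : SimpleGraph α) : twoSum G H = G ∆ H := by
  ext u v
  simp [symmDiff_def, and_comm]

theorem twoSum_le {A B T : SimpleGraph α} (hA : A ≤ T) (hB : B ≤ T) : twoSum A B ≤ T := by
  rw [twoSum_eq_symmDiff]
  exact symmDiff_le_sup.trans (sup_le hA hB)

theorem twoSum_twoSum_cancel_left (A B : SimpleGraph α) : twoSum A (twoSum A B) = B := by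
  rw [twoSum_eq_symmDiff, twoSum_eq_symmDiff, symmDiff_symmDiff_cancel_left]

theorem twoSumMany_cons {l : ℕ} (G : SimpleGraph α) (F : Fin l → SimpleGraph α) :
    twoSumMany (Fin.cons G F : Fin (l + 1) → SimpleGraph α) = twoSum G (twoSumMany F) := by
  simp [twoSumMany, List.ofFn_succ]

theorem twoSumMany_induction {P : SimpleGraph α → Prop} (bot : P ⊥)
    (step : ∀ G H, P G → P H → P (twoSum G H)) {l : ℕ} (F : Fin l → SimpleGraph α)
    (hF : ∀ k, P (F k)) : P (twoSumMany F) := by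
  have hL : ∀ G ∈ List.ofFn F, P G := List.forall_mem_ofFn_iff.2 hF
  unfold twoSumMany
  generalize List.ofFn F = L at hL ⊢
  induction L with
  | nil => exact bot
  | cons G L ih =>
    rw [List.forall_mem_cons] at hL
    exact step _ _ hL.1 (ih hL.2)

theorem tensorProd_mono {G G' : SimpleGraph α} {H H' : SimpleGraph β} (hG : G ≤ G')
    (hH : H ≤ H') : G ⊗t H ≤ G' ⊗t H' :=
  fun _ _ h => ⟨hG h.1, hH h.2⟩

theorem crossLike_tensorProd (G : SimpleGraph α) (H : SimpleGraph β) : CrossLike (G ⊗t H) :=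
  fun _ _ _ _ h => ⟨h.1, h.2.symm⟩

theorem CrossLike.adj_comm {K : SimpleGraph (α × β)} (hK : CrossLike K) (a c : α) (b d : β) :
    K.Adj (a, b) (c, d) ↔ K.Adj (a, d) (c, b) :=
  ⟨hK a c b d, hK a c d b⟩

theorem crossLike_twoSum {K K' : SimpleGraph (α × β)} (hK : CrossLike K)
    (hK' : CrossLike K') : CrossLike (twoSum K K') := by
  intro a c b d h
  simp only [twoSum_adj] at h ⊢
  rwa [hK.adj_comm, hK'.adj_comm] at h

@[simp] theorem singleEdge_adj {a b x y : α} :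
    (singleEdge a b).Adj x y ↔ s(x, y) = s(a, b) ∧ x ≠ y := by
  simp [singleEdge]

theorem singleEdge_adj_self {a b : α} (h : a ≠ b) : (singleEdge a b).Adj a b :=
  singleEdge_adj.2 ⟨rfl, h⟩

theorem CrossLike.singleEdge_tensorProd_le {K : SimpleGraph (α × β)} (hK : CrossLike K)
    {a c : α} {b d : β} (had : K.Adj (a, b) (c, d)) : singleEdge a c ⊗t singleEdge b d ≤ K := by
  rintro ⟨x₁, x₂⟩ ⟨y₁, y₂⟩ ⟨h₁, h₂⟩
  obtain ⟨e₁, -⟩ := singleEdge_adj.1 h₁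
  obtain ⟨e₂, -⟩ := singleEdge_adj.1 h₂
  rcases Sym2.eq_iff.1 e₁ with ⟨rfl, rfl⟩ | ⟨rfl, rfl⟩ <;>
    rcases Sym2.eq_iff.1 e₂ with ⟨rfl, rfl⟩ | ⟨rfl, rfl⟩
  exacts [had, hK _ _ _ _ had, (hK _ _ _ _ had).symm, had.symm]

def IsTensorElementary (T : SimpleGraph (α × β)) : Prop :=
  ∃ (a a' : α) (b b' : β), a ≠ a' ∧ b ≠ b' ∧ T = singleEdge a a' ⊗t singleEdge b b'

theorem CrossLike.exists_twoSumMany_isTensorElementary [Finite α] [Finite β]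
    {K : SimpleGraph (α × β)} (hK : CrossLike K) (hle : K ≤ ⊤ ⊗t ⊤) :
    ∃ (l : ℕ) (F : Fin l → SimpleGraph (α × β)),
      (∀ k, IsTensorElementary (F k)) ∧ K = twoSumMany F := by
  induction K using WellFoundedLT.induction with
  | _ K ih =>
  obtain rfl | hne := eq_or_ne K ⊥
  · exact ⟨0, Fin.elim0, fun k => k.elim0, rfl⟩
  obtain ⟨⟨a, b⟩, ⟨c, d⟩, had⟩ := ne_bot_iff_exists_adj.1 hne
  have hac : a ≠ c := (hle had).1.ne
  have hbd : b ≠ d := (hle had).2.ne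
  set T := singleEdge a c ⊗t singleEdge b d
  have hTK : T ≤ K := hK.singleEdge_tensorProd_le had
  have hT : T ≠ ⊥ := ne_bot_iff_exists_adj.2
    ⟨(a, b), (c, d), singleEdge_adj_self hac, singleEdge_adj_self hbd⟩
  have hrest : K \ T = twoSum T K := by rw [twoSum_eq_symmDiff, symmDiff_of_le hTK]
  obtain ⟨l, F, hF, hKF⟩ := ih (K \ T) (sdiff_lt hTK hT)
    (hrest ▸ crossLike_twoSum (crossLike_tensorProd _ _) hK) (sdiff_le.trans hle)
  refine ⟨l + 1, Fin.cons T F, Fin.cases ⟨a, c, b, d, hac, hbd, rfl⟩ hF, ?_⟩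
  rw [twoSumMany_cons, ← hKF, hrest, twoSum_twoSum_cancel_left]

/-- A nonempty family is obtained by prepending the same elementary graph twice,
which cancels modulo 2. -/
theorem CrossLike.exists_pos_twoSumMany_isTensorElementary [Finite α] [Finite β]
    [Nontrivial α] [Nontrivial β] {K : SimpleGraph (α × β)} (hK : CrossLike K)
    (hle : K ≤ ⊤ ⊗t ⊤) :
    ∃ (l : ℕ) (F : Fin l → SimpleGraph (α × β)),
      0 < l ∧ (∀ k, IsTensorElementary (F k)) ∧ K = twoSumMany F := by
  obtain ⟨l, F, hF, rfl⟩ := hK.exists_twoSumMany_isTensorElementary hle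
  obtain ⟨a, a', ha⟩ := exists_pair_ne α
  obtain ⟨b, b', hb⟩ := exists_pair_ne β
  set T := singleEdge a a' ⊗t singleEdge b b'
  have hT : IsTensorElementary T := ⟨a, a', b, b', ha, hb, rfl⟩
  refine ⟨l + 2, Fin.cons T (Fin.cons T F), (l + 1).succ_pos,
    Fin.cases hT (Fin.cases hT hF), ?_⟩
  rw [twoSumMany_cons, twoSumMany_cons, twoSum_twoSum_cancel_left]

/-- **Theorem (characterization of tensor 2-sums).** For `p, q ≥ 2` and a graph `K` on the
vertex set `Fin p × Fin q`, the following are equivalent: (i) `K ∈ 𝒦(p,q)`; (ii) `K` is a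
spanning, cross-like subgraph of `K_p ⊗ K_q`; (iii) `K` is a 2-sum of tensor-elementary
graphs. -/
theorem tensor2Sum_characterization (p q : ℕ) (hp : 2 ≤ p) (hq : 2 ≤ q)
    (K : SimpleGraph (Fin p × Fin q)) :
    List.TFAE
      [MemK p q K,
       K ≤ (⊤ : SimpleGraph (Fin p)) ⊗t (⊤ : SimpleGraph (Fin q)) ∧ CrossLike K,
       ∃ (l : ℕ) (i i' : Fin l → Fin p) (j j' : Fin l → Fin q),
         0 < l ∧ (∀ k, i k ≠ i' k) ∧ (∀ k, j k ≠ j' k) ∧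
         K = twoSumMany fun k => tensorElem (i k) (i' k) (j k) (j' k)] := by
  tfae_have 1 → 2 := by
    rintro ⟨l, G, H, -, -, -, rfl⟩
    exact ⟨twoSumMany_induction (P := (· ≤ ⊤ ⊗t ⊤)) bot_le (fun _ _ => twoSum_le) _
        fun _ => tensorProd_mono le_top le_top,
      twoSumMany_induction (P := CrossLike) (fun _ _ _ _ => id) (fun _ _ => crossLike_twoSum) _
        fun _ => crossLike_tensorProd _ _⟩
  tfae_have 2 → 3 := by
    rintro ⟨hle, hK⟩
    have := Fin.nontrivial_iff_two_le.2 hp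
    have := Fin.nontrivial_iff_two_le.2 hq
    obtain ⟨l, F, hl, hF, rfl⟩ := hK.exists_pos_twoSumMany_isTensorElementary hle
    choose i i' j j' hi hj hFk using hF
    exact ⟨l, i, i', j, j', hl, hi, hj, congrArg twoSumMany (funext hFk)⟩
  tfae_have 3 → 1 := by
    rintro ⟨l, i, i', j, j', hl, hi, hj, rfl⟩
    exact ⟨l, fun k => singleEdge (i k) (i' k), fun k => singleEdge (j k) (j' k), hl,
      fun k => ⟨_, _, singleEdge_adj_self (hi k)⟩, fun k => ⟨_, _, singleEdge_adj_self (hj k)⟩, rfl⟩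
  tfae_finish
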